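/- arXiv:1103.0918 — 4 statements merged into one kernel-verified Lean document; each statement's English description precedes it below -/
import Mathlib

section
/- For every pair of vectors v, w in ℝ³ with ‖v‖ = ‖w‖ = 1 and ⟨v, w⟩ = 0, there exists a skew-symmetric real 3×3 matrix B with B·v = 0 and B·w ≠ 0 such that the real 4×4 block matrix A = [[B, w],[wᵀ, 0]] satisfies A³ = 0. -/
open Matrix RealInnerProductSpace

noncomputable section

/-- The Lorentz inner product `⟨x,y⟩_L = x₁y₁ + x₂y₂ + x₃y₃ − x₄y₄` on `ℝ⁴`. -/
def lorentz (x y : Fin 4 → ℝ) : ℝ :=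
  x 0 * y 0 + x 1 * y 1 + x 2 * y 2 - x 3 * y 3

/-- The Lorentz signature matrix `J = diag(1,1,1,−1)`. -/
def lorentzJ : Matrix (Fin 4) (Fin 4) ℝ :=
  Matrix.diagonal ![1, 1, 1, -1]

/-- The block matrix `A = [[B, w], [wᵀ, 0]]`: upper-left `3×3` block `B`, last column the
entries of `w` in the first three rows and `0` in the last, last row the entries of `w`
in the first three columns and `0` in the last. -/
def blockA (B : Matrix (Fin 3) (Fin 3) ℝ) (w : Fin 3 → ℝ) : Matrix (Fin 4) (Fin 4) ℝ :=
  fun i j =>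
    if hi : (i : ℕ) < 3 then
      if hj : (j : ℕ) < 3 then B ⟨i, hi⟩ ⟨j, hj⟩ else w ⟨i, hi⟩
    else
      if hj : (j : ℕ) < 3 then w ⟨j, hj⟩ else 0

/-- The inclusion of `ℝ³` into `ℝ⁴` as the vectors with vanishing fourth coordinate. -/
def extend3 (v : Fin 3 → ℝ) : Fin 4 → ℝ :=
  fun i => if h : (i : ℕ) < 3 then v ⟨i, h⟩ else 0

/-- The fourth canonical basis vector `e₄ = (0,0,0,1)` of `ℝ⁴`. -/
def e4 : Fin 4 → ℝ := fun i => if i = 3 then 1 else 0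

private lemma fin3_mk0 (h : 0 < 3) : (⟨0, h⟩ : Fin 3) = 0 := rfl
private lemma fin3_mk1 (h : 1 < 3) : (⟨1, h⟩ : Fin 3) = 1 := rfl
private lemma fin3_mk2 (h : 2 < 3) : (⟨2, h⟩ : Fin 3) = 2 := rfl
private lemma fin4_mk0 (h : 0 < 4) : (⟨0, h⟩ : Fin 4) = 0 := rfl
private lemma fin4_mk1 (h : 1 < 4) : (⟨1, h⟩ : Fin 4) = 1 := rfl
private lemma fin4_mk2 (h : 2 < 4) : (⟨2, h⟩ : Fin 4) = 2 := rfl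
private lemma fin4_mk3 (h : 3 < 4) : (⟨3, h⟩ : Fin 4) = 3 := rfl

set_option maxHeartbeats 4000000 in
/-- For every pair of orthonormal vectors `v, w` in `ℝ³` there is a skew-symmetric
`3×3` matrix `B` with `B·v = 0` and `B·w ≠ 0` such that `A = [[B, w],[wᵀ, 0]]`
satisfies `A³ = 0`. -/
theorem exists_skewSymmetric_blockA_cube_eq_zero
    (v w : EuclideanSpace ℝ (Fin 3)) (hv : ‖v‖ = 1) (hw : ‖w‖ = 1) (hvw : ⟪v, w⟫ = 0) :
    ∃ B : Matrix (Fin 3) (Fin 3) ℝ,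
      Bᵀ = -B ∧ B.mulVec v = 0 ∧ B.mulVec w ≠ 0 ∧ blockA B w ^ 3 = 0 := by
  have hvv : ⟪v, v⟫ = 1 := by rw [real_inner_self_eq_norm_sq, hv]; norm_num
  have hww : ⟪w, w⟫ = 1 := by rw [real_inner_self_eq_norm_sq, hw]; norm_num
  rw [PiLp.inner_apply] at hvv hww hvw
  simp only [RCLike.inner_apply, starRingEnd_apply, star_trivial, Fin.sum_univ_three] at hvv hww hvw
  have h1 : v 0 ^ 2 + v 1 ^ 2 + v 2 ^ 2 = 1 := by linear_combination hvv
  have h2 : w 0 ^ 2 + w 1 ^ 2 + w 2 ^ 2 = 1 := by linear_combination hww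
  have h3 : v 0 * w 0 + v 1 * w 1 + v 2 * w 2 = 0 := by linear_combination hvw
  refine ⟨!![0, -v 2*w 1^2 - v 2*w 0^2 + v 1*w 1*w 2 + v 0*w 0*w 2, -v 2*w 1*w 2 + v 1*w 2^2 + v 1*w 0^2 - v 0*w 0*w 1; v 2*w 1^2 + v 2*w 0^2 - v 1*w 1*w 2 - v 0*w 0*w 2, 0, v 2*w 0*w 2 + v 1*w 0*w 1 - v 0*w 2^2 - v 0*w 1^2; v 2*w 1*w 2 - v 1*w 2^2 - v 1*w 0^2 + v 0*w 0*w 1, -v 2*w 0*w 2 - v 1*w 0*w 1 + v 0*w 2^2 + v 0*w 1^2, 0], ?_, ?_, ?_, ?_⟩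
  · ext i j
    fin_cases i <;> fin_cases j <;> simp [Matrix.transpose_apply, Matrix.neg_apply] <;> ring
  · funext i
    fin_cases i
    · simp only [fin3_mk0, fin3_mk1, fin3_mk2, Matrix.mulVec, dotProduct, Fin.sum_univ_three, Pi.zero_apply, Fin.isValue, Matrix.cons_val', Matrix.cons_val_zero, Matrix.cons_val_one, Matrix.head_cons, Matrix.empty_val', Matrix.cons_val_fin_one, Matrix.head_fin_const, Fin.mk_zero, Fin.mk_one, Matrix.cons_val_two, Matrix.tail_cons, Matrix.of_apply]
      linear_combination (-v 2*w 1 + v 1*w 2) * h3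
    · simp only [fin3_mk0, fin3_mk1, fin3_mk2, Matrix.mulVec, dotProduct, Fin.sum_univ_three, Pi.zero_apply, Fin.isValue, Matrix.cons_val', Matrix.cons_val_zero, Matrix.cons_val_one, Matrix.head_cons, Matrix.empty_val', Matrix.cons_val_fin_one, Matrix.head_fin_const, Fin.mk_zero, Fin.mk_one, Matrix.cons_val_two, Matrix.tail_cons, Matrix.of_apply]
      linear_combination (v 2*w 0 - v 0*w 2) * h3
    · simp only [fin3_mk0, fin3_mk1, fin3_mk2, Matrix.mulVec, dotProduct, Fin.sum_univ_three, Pi.zero_apply, Fin.isValue, Matrix.cons_val', Matrix.cons_val_zero, Matrix.cons_val_one, Matrix.head_cons, Matrix.empty_val', Matrix.cons_val_fin_one, Matrix.head_fin_const, Fin.mk_zero, Fin.mk_one, Matrix.cons_val_two, Matrix.tail_cons, Matrix.of_apply]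
      linear_combination (-v 1*w 0 + v 0*w 1) * h3
  · intro hBw
    have e0 := congrFun hBw 0
    have e1 := congrFun hBw 1
    have e2 := congrFun hBw 2
    simp only [fin3_mk0, fin3_mk1, fin3_mk2, Matrix.mulVec, dotProduct, Fin.sum_univ_three, Pi.zero_apply, Fin.isValue,
      Matrix.cons_val', Matrix.cons_val_zero, Matrix.cons_val_one, Matrix.head_cons,
      Matrix.empty_val', Matrix.cons_val_fin_one, Matrix.head_fin_const,
      Matrix.cons_val_two, Matrix.tail_cons, Matrix.of_apply] at e0 e1 e2
    have hcontra : (1:ℝ) = 0 := by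
      linear_combination (-v 2*w 1 + v 1*w 2) * e0 + (v 2*w 0 - v 0*w 2) * e1 + (-v 1*w 0 + v 0*w 1) * e2 + (-1 + w 2^2 - w 2^4 + w 1^2 - 2*w 1^2*w 2^2 - w 1^4 - w 0^2*w 2^2 - w 0^2*w 1^2) * h1 + (-w 2^2 - w 1^2 - v 2^2 + v 2^2*w 2^2 - v 2^2*w 0^2 + 2*v 1*v 2*w 1*w 2 - v 1^2 + v 1^2*w 1^2 - v 1^2*w 0^2 + 2*v 0*v 2*w 0*w 2 + 2*v 0*v 1*w 0*w 1 - v 0^2) * h2 + (v 2*w 2 + v 1*w 1 + v 0*w 0) * h3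
    norm_num at hcontra
  · have key : blockA (!![0, -v 2*w 1^2 - v 2*w 0^2 + v 1*w 1*w 2 + v 0*w 0*w 2, -v 2*w 1*w 2 + v 1*w 2^2 + v 1*w 0^2 - v 0*w 0*w 1; v 2*w 1^2 + v 2*w 0^2 - v 1*w 1*w 2 - v 0*w 0*w 2, 0, v 2*w 0*w 2 + v 1*w 0*w 1 - v 0*w 2^2 - v 0*w 1^2; v 2*w 1*w 2 - v 1*w 2^2 - v 1*w 0^2 + v 0*w 0*w 1, -v 2*w 0*w 2 - v 1*w 0*w 1 + v 0*w 2^2 + v 0*w 1^2, 0]) w = !![0, -v 2*w 1^2 - v 2*w 0^2 + v 1*w 1*w 2 + v 0*w 0*w 2, -v 2*w 1*w 2 + v 1*w 2^2 + v 1*w 0^2 - v 0*w 0*w 1, w 0; v 2*w 1^2 + v 2*w 0^2 - v 1*w 1*w 2 - v 0*w 0*w 2, 0, v 2*w 0*w 2 + v 1*w 0*w 1 - v 0*w 2^2 - v 0*w 1^2, w 1; v 2*w 1*w 2 - v 1*w 2^2 - v 1*w 0^2 + v 0*w 0*w 1, -v 2*w 0*w 2 - v 1*w 0*w 1 + v 0*w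 2^2 + v 0*w 1^2, 0, w 2; w 0, w 1, w 2, 0] := by
      ext i j
      fin_cases i <;> fin_cases j <;> rfl
    rw [key, pow_succ, pow_two]
    ext i j
    fin_cases i <;> fin_cases j
    · simp only [fin3_mk0, fin3_mk1, fin3_mk2, fin4_mk0, fin4_mk1, fin4_mk2, fin4_mk3, Matrix.mul_apply, Fin.sum_univ_four, Matrix.zero_apply, Fin.isValue, Matrix.cons_val', Matrix.cons_val_zero, Matrix.cons_val_one, Matrix.head_cons, Matrix.empty_val', Matrix.cons_val_fin_one, Matrix.head_fin_const, Fin.mk_zero, Fin.mk_one, Matrix.cons_val_two, Matrix.cons_val_three, Matrix.tail_cons, Matrix.of_apply]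
      linear_combination (0:ℝ) * h1
    · simp only [fin3_mk0, fin3_mk1, fin3_mk2, fin4_mk0, fin4_mk1, fin4_mk2, fin4_mk3, Matrix.mul_apply, Fin.sum_univ_four, Matrix.zero_apply, Fin.isValue, Matrix.cons_val', Matrix.cons_val_zero, Matrix.cons_val_one, Matrix.head_cons, Matrix.empty_val', Matrix.cons_val_fin_one, Matrix.head_fin_const, Fin.mk_zero, Fin.mk_one, Matrix.cons_val_two, Matrix.cons_val_three, Matrix.tail_cons, Matrix.of_apply]
      linear_combination (v 2 - 3*v 2*w 2^2 + 2*v 2*w 2^4 - v 2*w 1^2 + 2*v 2*w 1^2*w 2^2 + v 2*w 1^2*w 2^4 + 2*v 2*w 1^4*w 2^2 + v 2*w 1^6 + 3*v 2*w 0^2*w 2^4 + 5*v 2*w 0^2*w 1^2*w 2^2 + 2*v 2*w 0^2*w 1^4 + 3*v 2*w 0^4*w 2^2 + v 2*w 0^4*w 1^2 - 2*v 1*w 1*w 2 + 2*v 1*w 1*w 2^3 - v 1*w 1*w 2^5 + 2*v 1*w 1^3*w 2 - 2*v 1*w 1^3*w 2^3 - v 1*w 1^5*w 2 + v 1*w 0^2*w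 1*w 2^3 + v 1*w 0^2*w 1^3*w 2 + 2*v 1*w 0^4*w 1*w 2 - v 0*w 0*w 2^5 - 2*v 0*w 0*w 1^2*w 2^3 - v 0*w 0*w 1^4*w 2 - v 0*w 0^3*w 2^3 - v 0*w 0^3*w 1^2*w 2) * h1 + (-v 2 + 3*v 2*w 2^2 + v 2*w 1^2*w 2^2 + v 2*w 1^4 - v 2*w 0^2 + 3*v 2*w 0^2*w 2^2 + v 2*w 0^2*w 1^2 + v 2^3 - 4*v 2^3*w 2^2 - v 2^3*w 1^2*w 2^2 + v 2^3*w 0^2 - 3*v 2^3*w 0^2*w 2^2 + v 2^3*w 0^2*w 1^2 + v 2^3*w 0^4 + 3*v 1*w 1*w 2 - v 1*w 1*w 2^3 - v 1*w 1^3*w 2 + 2*v 1*w 0^2*w 1*w 2 - 5*v 1*v 2^2*w 1*w 2 + v 1*v 2^2*w 1*w 2^3 - 2*v 1*v 2^2*w 1^3*w 2 - 5*v 1*v 2^2*w 0^2*w 1*w 2 + v 1^2*v 2 - 3*v 1^2*v 2*w 2^2 - v 1^2*v 2*w 1^2 + 2*v 1^2*v 2*w 1^2*w 2^2 - v 1^2*v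 2*w 1^4 + v 1^2*v 2*w 0^2 - 2*v 1^2*v 2*w 0^2*w 2^2 + v 1^2*v 2*w 0^4 - 3*v 1^3*w 1*w 2 + v 1^3*w 1^3*w 2 - 3*v 1^3*w 0^2*w 1*w 2 + v 0*w 0*w 2 - v 0*w 0*w 2^3 - v 0*w 0*w 1^2*w 2 - 3*v 0*v 2^2*w 0*w 2 + v 0*v 2^2*w 0*w 2^3 - 2*v 0*v 2^2*w 0*w 1^2*w 2 - 3*v 0*v 2^2*w 0^3*w 2 - 2*v 0*v 1*v 2*w 0*w 1 + 4*v 0*v 1*v 2*w 0*w 1*w 2^2 - 2*v 0*v 1*v 2*w 0*w 1^3 - 2*v 0*v 1*v 2*w 0^3*w 1 - v 0*v 1^2*w 0*w 2 + 3*v 0*v 1^2*w 0*w 1^2*w 2 - v 0*v 1^2*w 0^3*w 2 + v 0^2*v 2 - 2*v 0^2*v 2*w 2^2 - 2*v 0^2*v 1*w 1*w 2) * h2 + (w 2 - w 2^3 - w 1^2*w 2 - 2*v 2^2*w 2 + 2*v 2^2*w 2^3 + v 2^2*w 1^2*w 2 - v 1*v 2*w 1 + 2*v 1*v 2*w 1*w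 2^2 - v 1^2*w 2 + v 1^2*w 2^3 + 2*v 1^2*w 1^2*w 2 - v 0*v 2*w 0 + 2*v 0*v 2*w 0*w 2^2 + 2*v 0*v 1*w 0*w 1*w 2) * h3
    · simp only [fin3_mk0, fin3_mk1, fin3_mk2, fin4_mk0, fin4_mk1, fin4_mk2, fin4_mk3, Matrix.mul_apply, Fin.sum_univ_four, Matrix.zero_apply, Fin.isValue, Matrix.cons_val', Matrix.cons_val_zero, Matrix.cons_val_one, Matrix.head_cons, Matrix.empty_val', Matrix.cons_val_fin_one, Matrix.head_fin_const, Fin.mk_zero, Fin.mk_one, Matrix.cons_val_two, Matrix.cons_val_three, Matrix.tail_cons, Matrix.of_apply]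
      linear_combination (2*v 2*w 1*w 2 - 2*v 2*w 1*w 2^3 + v 2*w 1*w 2^5 - 2*v 2*w 1^3*w 2 + 2*v 2*w 1^3*w 2^3 + v 2*w 1^5*w 2 - v 2*w 0^2*w 1*w 2^3 - v 2*w 0^2*w 1^3*w 2 - 2*v 2*w 0^4*w 1*w 2 - v 1 + v 1*w 2^2 - v 1*w 2^6 + 3*v 1*w 1^2 - 2*v 1*w 1^2*w 2^2 - 2*v 1*w 1^2*w 2^4 - 2*v 1*w 1^4 - v 1*w 1^4*w 2^2 - 2*v 1*w 0^2*w 2^4 - 5*v 1*w 0^2*w 1^2*w 2^2 - 3*v 1*w 0^2*w 1^4 - v 1*w 0^4*w 2^2 - 3*v 1*w 0^4*w 1^2 + v 0*w 0*w 1*w 2^4 + 2*v 0*w 0*w 1^3*w 2^2 + v 0*w 0*w 1^5 + v 0*w 0^3*w 1*w 2^2 + v 0*w 0^3*w 1^3) * h1 + (-3*v 2*w 1*w 2 + v 2*w 1*w 2^3 + v 2*w 1^3*w 2 - 2*v 2*w 0^2*w 1*w 2 + 3*v 2^3*w 1*w 2 - v 2^3*w 1*w 2^3 + 3*v 2^3*w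 0^2*w 1*w 2 + v 1 - v 1*w 2^4 - 3*v 1*w 1^2 - v 1*w 1^2*w 2^2 + v 1*w 0^2 - v 1*w 0^2*w 2^2 - 3*v 1*w 0^2*w 1^2 - v 1*v 2^2 + v 1*v 2^2*w 2^2 + v 1*v 2^2*w 2^4 + 3*v 1*v 2^2*w 1^2 - 2*v 1*v 2^2*w 1^2*w 2^2 - v 1*v 2^2*w 0^2 + 2*v 1*v 2^2*w 0^2*w 1^2 - v 1*v 2^2*w 0^4 + 5*v 1^2*v 2*w 1*w 2 + 2*v 1^2*v 2*w 1*w 2^3 - v 1^2*v 2*w 1^3*w 2 + 5*v 1^2*v 2*w 0^2*w 1*w 2 - v 1^3 + 4*v 1^3*w 1^2 + v 1^3*w 1^2*w 2^2 - v 1^3*w 0^2 - v 1^3*w 0^2*w 2^2 + 3*v 1^3*w 0^2*w 1^2 - v 1^3*w 0^4 - v 0*w 0*w 1 + v 0*w 0*w 1*w 2^2 + v 0*w 0*w 1^3 + v 0*v 2^2*w 0*w 1 - 3*v 0*v 2^2*w 0*w 1*w 2^2 + v 0*v 2^2*w 0^3*w 1 + 2*v 0*v 1*v 2*w 0*w 2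 + 2*v 0*v 1*v 2*w 0*w 2^3 - 4*v 0*v 1*v 2*w 0*w 1^2*w 2 + 2*v 0*v 1*v 2*w 0^3*w 2 + 3*v 0*v 1^2*w 0*w 1 + 2*v 0*v 1^2*w 0*w 1*w 2^2 - v 0*v 1^2*w 0*w 1^3 + 3*v 0*v 1^2*w 0^3*w 1 + 2*v 0^2*v 2*w 1*w 2 - v 0^2*v 1 + 2*v 0^2*v 1*w 1^2) * h2 + (-w 1 + w 1*w 2^2 + w 1^3 + v 2^2*w 1 - 2*v 2^2*w 1*w 2^2 - v 2^2*w 1^3 + v 1*v 2*w 2 - 2*v 1*v 2*w 1^2*w 2 + 2*v 1^2*w 1 - v 1^2*w 1*w 2^2 - 2*v 1^2*w 1^3 - 2*v 0*v 2*w 0*w 1*w 2 + v 0*v 1*w 0 - 2*v 0*v 1*w 0*w 1^2) * h3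
    · simp only [fin3_mk0, fin3_mk1, fin3_mk2, fin4_mk0, fin4_mk1, fin4_mk2, fin4_mk3, Matrix.mul_apply, Fin.sum_univ_four, Matrix.zero_apply, Fin.isValue, Matrix.cons_val', Matrix.cons_val_zero, Matrix.cons_val_one, Matrix.head_cons, Matrix.empty_val', Matrix.cons_val_fin_one, Matrix.head_fin_const, Fin.mk_zero, Fin.mk_one, Matrix.cons_val_two, Matrix.cons_val_three, Matrix.tail_cons, Matrix.of_apply]
      linear_combination (-w 0 + w 0*w 2^2 - w 0*w 2^4 + w 0*w 1^2 - 2*w 0*w 1^2*w 2^2 - w 0*w 1^4 - w 0^3*w 2^2 - w 0^3*w 1^2) * h1 + (w 0 - w 0*w 2^2 - w 0*w 1^2 - v 2^2*w 0 + v 2^2*w 0*w 2^2 - v 2^2*w 0^3 + 2*v 1*v 2*w 0*w 1*w 2 - v 1^2*w 0 + v 1^2*w 0*w 1^2 - v 1^2*w 0^3 + 2*v 0*v 2*w 0^2*w 2 + 2*v 0*v 1*w 0^2*w 1 - v 0^2*w 0) * h2 + (v 2*w 0*w 2 + v 1*w 0*w 1 + v 0*w 0^2) * h3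
    · simp only [fin3_mk0, fin3_mk1, fin3_mk2, fin4_mk0, fin4_mk1, fin4_mk2, fin4_mk3, Matrix.mul_apply, Fin.sum_univ_four, Matrix.zero_apply, Fin.isValue, Matrix.cons_val', Matrix.cons_val_zero, Matrix.cons_val_one, Matrix.head_cons, Matrix.empty_val', Matrix.cons_val_fin_one, Matrix.head_fin_const, Fin.mk_zero, Fin.mk_one, Matrix.cons_val_two, Matrix.cons_val_three, Matrix.tail_cons, Matrix.of_apply]
      linear_combination (-v 2 + 3*v 2*w 2^2 - 2*v 2*w 2^4 + v 2*w 1^2 - 2*v 2*w 1^2*w 2^2 - v 2*w 1^2*w 2^4 - 2*v 2*w 1^4*w 2^2 - v 2*w 1^6 - 3*v 2*w 0^2*w 2^4 - 5*v 2*w 0^2*w 1^2*w 2^2 - 2*v 2*w 0^2*w 1^4 - 3*v 2*w 0^4*w 2^2 - v 2*w 0^4*w 1^2 + 2*v 1*w 1*w 2 - 2*v 1*w 1*w 2^3 + v 1*w 1*w 2^5 - 2*v 1*w 1^3*w 2 + 2*v 1*w 1^3*w 2^3 + v 1*w 1^5*w 2 - v 1*w 0^2*w 1*w 2^3 - v 1*w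 0^2*w 1^3*w 2 - 2*v 1*w 0^4*w 1*w 2 + v 0*w 0*w 2^5 + 2*v 0*w 0*w 1^2*w 2^3 + v 0*w 0*w 1^4*w 2 + v 0*w 0^3*w 2^3 + v 0*w 0^3*w 1^2*w 2) * h1 + (v 2 - 3*v 2*w 2^2 - v 2*w 1^2*w 2^2 - v 2*w 1^4 + v 2*w 0^2 - 3*v 2*w 0^2*w 2^2 - v 2*w 0^2*w 1^2 - v 2^3 + 4*v 2^3*w 2^2 + v 2^3*w 1^2*w 2^2 - v 2^3*w 0^2 + 3*v 2^3*w 0^2*w 2^2 - v 2^3*w 0^2*w 1^2 - v 2^3*w 0^4 - 3*v 1*w 1*w 2 + v 1*w 1*w 2^3 + v 1*w 1^3*w 2 - 2*v 1*w 0^2*w 1*w 2 + 5*v 1*v 2^2*w 1*w 2 - v 1*v 2^2*w 1*w 2^3 + 2*v 1*v 2^2*w 1^3*w 2 + 5*v 1*v 2^2*w 0^2*w 1*w 2 - v 1^2*v 2 + 3*v 1^2*v 2*w 2^2 + v 1^2*v 2*w 1^2 - 2*v 1^2*v 2*w 1^2*w 2^2 + v 1^2*v 2*w 1^4 - v 1^2*v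 2*w 0^2 + 2*v 1^2*v 2*w 0^2*w 2^2 - v 1^2*v 2*w 0^4 + 3*v 1^3*w 1*w 2 - v 1^3*w 1^3*w 2 + 3*v 1^3*w 0^2*w 1*w 2 - v 0*w 0*w 2 + v 0*w 0*w 2^3 + v 0*w 0*w 1^2*w 2 + 3*v 0*v 2^2*w 0*w 2 - v 0*v 2^2*w 0*w 2^3 + 2*v 0*v 2^2*w 0*w 1^2*w 2 + 3*v 0*v 2^2*w 0^3*w 2 + 2*v 0*v 1*v 2*w 0*w 1 - 4*v 0*v 1*v 2*w 0*w 1*w 2^2 + 2*v 0*v 1*v 2*w 0*w 1^3 + 2*v 0*v 1*v 2*w 0^3*w 1 + v 0*v 1^2*w 0*w 2 - 3*v 0*v 1^2*w 0*w 1^2*w 2 + v 0*v 1^2*w 0^3*w 2 - v 0^2*v 2 + 2*v 0^2*v 2*w 2^2 + 2*v 0^2*v 1*w 1*w 2) * h2 + (-w 2 + w 2^3 + w 1^2*w 2 + 2*v 2^2*w 2 - 2*v 2^2*w 2^3 - v 2^2*w 1^2*w 2 + v 1*v 2*w 1 - 2*v 1*v 2*w 1*w 2^2 + v 1^2*w 2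 - v 1^2*w 2^3 - 2*v 1^2*w 1^2*w 2 + v 0*v 2*w 0 - 2*v 0*v 2*w 0*w 2^2 - 2*v 0*v 1*w 0*w 1*w 2) * h3
    · simp only [fin3_mk0, fin3_mk1, fin3_mk2, fin4_mk0, fin4_mk1, fin4_mk2, fin4_mk3, Matrix.mul_apply, Fin.sum_univ_four, Matrix.zero_apply, Fin.isValue, Matrix.cons_val', Matrix.cons_val_zero, Matrix.cons_val_one, Matrix.head_cons, Matrix.empty_val', Matrix.cons_val_fin_one, Matrix.head_fin_const, Fin.mk_zero, Fin.mk_one, Matrix.cons_val_two, Matrix.cons_val_three, Matrix.tail_cons, Matrix.of_apply]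
      linear_combination (0:ℝ) * h1
    · simp only [fin3_mk0, fin3_mk1, fin3_mk2, fin4_mk0, fin4_mk1, fin4_mk2, fin4_mk3, Matrix.mul_apply, Fin.sum_univ_four, Matrix.zero_apply, Fin.isValue, Matrix.cons_val', Matrix.cons_val_zero, Matrix.cons_val_one, Matrix.head_cons, Matrix.empty_val', Matrix.cons_val_fin_one, Matrix.head_fin_const, Fin.mk_zero, Fin.mk_one, Matrix.cons_val_two, Matrix.cons_val_three, Matrix.tail_cons, Matrix.of_apply]
      linear_combination (-2*v 2*w 0*w 2 + 2*v 2*w 0*w 2^3 - 3*v 2*w 0*w 2^5 + 2*v 2*w 0*w 1^2*w 2 - 6*v 2*w 0*w 1^2*w 2^3 - 3*v 2*w 0*w 1^4*w 2 - 3*v 2*w 0^3*w 2^3 - 3*v 2*w 0^3*w 1^2*w 2 - 2*v 1*w 0*w 1 + 2*v 1*w 0*w 1*w 2^2 - 3*v 1*w 0*w 1*w 2^4 + 2*v 1*w 0*w 1^3 - 6*v 1*w 0*w 1^3*w 2^2 - 3*v 1*w 0*w 1^5 - 3*v 1*w 0^3*w 1*w 2^2 - 3*v 1*w 0^3*w 1^3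 - v 0 + v 0*w 2^2 + v 0*w 2^6 + v 0*w 1^2 + 3*v 0*w 1^2*w 2^4 + 3*v 0*w 1^4*w 2^2 + v 0*w 1^6 + v 0*w 0^2*w 2^4 + 2*v 0*w 0^2*w 1^2*w 2^2 + v 0*w 0^2*w 1^4) * h1 + (v 2*w 0*w 2 - 3*v 2*w 0*w 2^3 - 3*v 2*w 0*w 1^2*w 2 - v 2^3*w 0*w 2 + 3*v 2^3*w 0*w 2^3 + 2*v 2^3*w 0*w 1^2*w 2 - v 2^3*w 0^3*w 2 + v 1*w 0*w 1 - 3*v 1*w 0*w 1*w 2^2 - 3*v 1*w 0*w 1^3 - v 1*v 2^2*w 0*w 1 + 5*v 1*v 2^2*w 0*w 1*w 2^2 + 2*v 1*v 2^2*w 0*w 1^3 - v 1*v 2^2*w 0^3*w 1 - v 1^2*v 2*w 0*w 2 + 2*v 1^2*v 2*w 0*w 2^3 + 5*v 1^2*v 2*w 0*w 1^2*w 2 - v 1^2*v 2*w 0^3*w 2 - v 1^3*w 0*w 1 + 2*v 1^3*w 0*w 1*w 2^2 + 3*v 1^3*w 0*w 1^3 - v 1^3*w 0^3*w 1 + v 0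 + v 0*w 2^4 + 2*v 0*w 1^2*w 2^2 + v 0*w 1^4 - v 0*v 2^2 - v 0*v 2^2*w 2^2 - v 0*v 2^2*w 2^4 - v 0*v 2^2*w 1^2*w 2^2 + 3*v 0*v 2^2*w 0^2*w 2^2 + v 0*v 2^2*w 0^2*w 1^2 - 2*v 0*v 1*v 2*w 1*w 2 - 2*v 0*v 1*v 2*w 1*w 2^3 - 2*v 0*v 1*v 2*w 1^3*w 2 + 4*v 0*v 1*v 2*w 0^2*w 1*w 2 - v 0*v 1^2 - v 0*v 1^2*w 1^2 - v 0*v 1^2*w 1^2*w 2^2 - v 0*v 1^2*w 1^4 + v 0*v 1^2*w 0^2*w 2^2 + 3*v 0*v 1^2*w 0^2*w 1^2 - 2*v 0^2*v 2*w 0*w 2 - 2*v 0^2*v 1*w 0*w 1 - v 0^3) * h2 + (-w 0 - w 0*w 2^2 - w 0*w 1^2 + v 2^2*w 0 + 2*v 2^2*w 0*w 2^2 + v 2^2*w 0*w 1^2 + 2*v 1*v 2*w 0*w 1*w 2 + v 1^2*w 0 + v 1^2*w 0*w 2^2 + 2*v 1^2*w 0*w 1^2 - v 0*v 2*w 2 +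 2*v 0*v 2*w 0^2*w 2 - v 0*v 1*w 1 + 2*v 0*v 1*w 0^2*w 1 + v 0^2*w 0) * h3
    · simp only [fin3_mk0, fin3_mk1, fin3_mk2, fin4_mk0, fin4_mk1, fin4_mk2, fin4_mk3, Matrix.mul_apply, Fin.sum_univ_four, Matrix.zero_apply, Fin.isValue, Matrix.cons_val', Matrix.cons_val_zero, Matrix.cons_val_one, Matrix.head_cons, Matrix.empty_val', Matrix.cons_val_fin_one, Matrix.head_fin_const, Fin.mk_zero, Fin.mk_one, Matrix.cons_val_two, Matrix.cons_val_three, Matrix.tail_cons, Matrix.of_apply]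
      linear_combination (-w 1 + w 1*w 2^2 - w 1*w 2^4 + w 1^3 - 2*w 1^3*w 2^2 - w 1^5 - w 0^2*w 1*w 2^2 - w 0^2*w 1^3) * h1 + (w 1 - w 1*w 2^2 - w 1^3 - v 2^2*w 1 + v 2^2*w 1*w 2^2 - v 2^2*w 0^2*w 1 + 2*v 1*v 2*w 1^2*w 2 - v 1^2*w 1 + v 1^2*w 1^3 - v 1^2*w 0^2*w 1 + 2*v 0*v 2*w 0*w 1*w 2 + 2*v 0*v 1*w 0*w 1^2 - v 0^2*w 1) * h2 + (v 2*w 1*w 2 + v 1*w 1^2 + v 0*w 0*w 1) * h3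
    · simp only [fin3_mk0, fin3_mk1, fin3_mk2, fin4_mk0, fin4_mk1, fin4_mk2, fin4_mk3, Matrix.mul_apply, Fin.sum_univ_four, Matrix.zero_apply, Fin.isValue, Matrix.cons_val', Matrix.cons_val_zero, Matrix.cons_val_one, Matrix.head_cons, Matrix.empty_val', Matrix.cons_val_fin_one, Matrix.head_fin_const, Fin.mk_zero, Fin.mk_one, Matrix.cons_val_two, Matrix.cons_val_three, Matrix.tail_cons, Matrix.of_apply]
      linear_combination (-2*v 2*w 1*w 2 + 2*v 2*w 1*w 2^3 - v 2*w 1*w 2^5 + 2*v 2*w 1^3*w 2 - 2*v 2*w 1^3*w 2^3 - v 2*w 1^5*w 2 + v 2*w 0^2*w 1*w 2^3 + v 2*w 0^2*w 1^3*w 2 + 2*v 2*w 0^4*w 1*w 2 + v 1 - v 1*w 2^2 + v 1*w 2^6 - 3*v 1*w 1^2 + 2*v 1*w 1^2*w 2^2 + 2*v 1*w 1^2*w 2^4 + 2*v 1*w 1^4 + v 1*w 1^4*w 2^2 + 2*v 1*w 0^2*w 2^4 + 5*v 1*w 0^2*w 1^2*w 2^2 + 3*v 1*w 0^2*w 1^4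 + v 1*w 0^4*w 2^2 + 3*v 1*w 0^4*w 1^2 - v 0*w 0*w 1*w 2^4 - 2*v 0*w 0*w 1^3*w 2^2 - v 0*w 0*w 1^5 - v 0*w 0^3*w 1*w 2^2 - v 0*w 0^3*w 1^3) * h1 + (3*v 2*w 1*w 2 - v 2*w 1*w 2^3 - v 2*w 1^3*w 2 + 2*v 2*w 0^2*w 1*w 2 - 3*v 2^3*w 1*w 2 + v 2^3*w 1*w 2^3 - 3*v 2^3*w 0^2*w 1*w 2 - v 1 + v 1*w 2^4 + 3*v 1*w 1^2 + v 1*w 1^2*w 2^2 - v 1*w 0^2 + v 1*w 0^2*w 2^2 + 3*v 1*w 0^2*w 1^2 + v 1*v 2^2 - v 1*v 2^2*w 2^2 - v 1*v 2^2*w 2^4 - 3*v 1*v 2^2*w 1^2 + 2*v 1*v 2^2*w 1^2*w 2^2 + v 1*v 2^2*w 0^2 - 2*v 1*v 2^2*w 0^2*w 1^2 + v 1*v 2^2*w 0^4 - 5*v 1^2*v 2*w 1*w 2 - 2*v 1^2*v 2*w 1*w 2^3 + v 1^2*v 2*w 1^3*w 2 - 5*v 1^2*v 2*w 0^2*w 1*w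 2 + v 1^3 - 4*v 1^3*w 1^2 - v 1^3*w 1^2*w 2^2 + v 1^3*w 0^2 + v 1^3*w 0^2*w 2^2 - 3*v 1^3*w 0^2*w 1^2 + v 1^3*w 0^4 + v 0*w 0*w 1 - v 0*w 0*w 1*w 2^2 - v 0*w 0*w 1^3 - v 0*v 2^2*w 0*w 1 + 3*v 0*v 2^2*w 0*w 1*w 2^2 - v 0*v 2^2*w 0^3*w 1 - 2*v 0*v 1*v 2*w 0*w 2 - 2*v 0*v 1*v 2*w 0*w 2^3 + 4*v 0*v 1*v 2*w 0*w 1^2*w 2 - 2*v 0*v 1*v 2*w 0^3*w 2 - 3*v 0*v 1^2*w 0*w 1 - 2*v 0*v 1^2*w 0*w 1*w 2^2 + v 0*v 1^2*w 0*w 1^3 - 3*v 0*v 1^2*w 0^3*w 1 - 2*v 0^2*v 2*w 1*w 2 + v 0^2*v 1 - 2*v 0^2*v 1*w 1^2) * h2 + (w 1 - w 1*w 2^2 - w 1^3 - v 2^2*w 1 + 2*v 2^2*w 1*w 2^2 + v 2^2*w 1^3 - v 1*v 2*w 2 + 2*v 1*v 2*w 1^2*w 2 - 2*v 1^2*w 1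 + v 1^2*w 1*w 2^2 + 2*v 1^2*w 1^3 + 2*v 0*v 2*w 0*w 1*w 2 - v 0*v 1*w 0 + 2*v 0*v 1*w 0*w 1^2) * h3
    · simp only [fin3_mk0, fin3_mk1, fin3_mk2, fin4_mk0, fin4_mk1, fin4_mk2, fin4_mk3, Matrix.mul_apply, Fin.sum_univ_four, Matrix.zero_apply, Fin.isValue, Matrix.cons_val', Matrix.cons_val_zero, Matrix.cons_val_one, Matrix.head_cons, Matrix.empty_val', Matrix.cons_val_fin_one, Matrix.head_fin_const, Fin.mk_zero, Fin.mk_one, Matrix.cons_val_two, Matrix.cons_val_three, Matrix.tail_cons, Matrix.of_apply]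
      linear_combination (2*v 2*w 0*w 2 - 2*v 2*w 0*w 2^3 + 3*v 2*w 0*w 2^5 - 2*v 2*w 0*w 1^2*w 2 + 6*v 2*w 0*w 1^2*w 2^3 + 3*v 2*w 0*w 1^4*w 2 + 3*v 2*w 0^3*w 2^3 + 3*v 2*w 0^3*w 1^2*w 2 + 2*v 1*w 0*w 1 - 2*v 1*w 0*w 1*w 2^2 + 3*v 1*w 0*w 1*w 2^4 - 2*v 1*w 0*w 1^3 + 6*v 1*w 0*w 1^3*w 2^2 + 3*v 1*w 0*w 1^5 + 3*v 1*w 0^3*w 1*w 2^2 + 3*v 1*w 0^3*w 1^3 + v 0 - v 0*w 2^2 - v 0*w 2^6 - v 0*w 1^2 - 3*v 0*w 1^2*w 2^4 - 3*v 0*w 1^4*w 2^2 - v 0*w 1^6 - v 0*w 0^2*w 2^4 - 2*v 0*w 0^2*w 1^2*w 2^2 - v 0*w 0^2*w 1^4) * h1 + (-v 2*w 0*w 2 + 3*v 2*w 0*w 2^3 + 3*v 2*w 0*w 1^2*w 2 + v 2^3*w 0*w 2 - 3*v 2^3*w 0*w 2^3 - 2*v 2^3*w 0*w 1^2*w 2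 + v 2^3*w 0^3*w 2 - v 1*w 0*w 1 + 3*v 1*w 0*w 1*w 2^2 + 3*v 1*w 0*w 1^3 + v 1*v 2^2*w 0*w 1 - 5*v 1*v 2^2*w 0*w 1*w 2^2 - 2*v 1*v 2^2*w 0*w 1^3 + v 1*v 2^2*w 0^3*w 1 + v 1^2*v 2*w 0*w 2 - 2*v 1^2*v 2*w 0*w 2^3 - 5*v 1^2*v 2*w 0*w 1^2*w 2 + v 1^2*v 2*w 0^3*w 2 + v 1^3*w 0*w 1 - 2*v 1^3*w 0*w 1*w 2^2 - 3*v 1^3*w 0*w 1^3 + v 1^3*w 0^3*w 1 - v 0 - v 0*w 2^4 - 2*v 0*w 1^2*w 2^2 - v 0*w 1^4 + v 0*v 2^2 + v 0*v 2^2*w 2^2 + v 0*v 2^2*w 2^4 + v 0*v 2^2*w 1^2*w 2^2 - 3*v 0*v 2^2*w 0^2*w 2^2 - v 0*v 2^2*w 0^2*w 1^2 + 2*v 0*v 1*v 2*w 1*w 2 + 2*v 0*v 1*v 2*w 1*w 2^3 + 2*v 0*v 1*v 2*w 1^3*w 2 - 4*v 0*v 1*v 2*w 0^2*w 1*w 2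 + v 0*v 1^2 + v 0*v 1^2*w 1^2 + v 0*v 1^2*w 1^2*w 2^2 + v 0*v 1^2*w 1^4 - v 0*v 1^2*w 0^2*w 2^2 - 3*v 0*v 1^2*w 0^2*w 1^2 + 2*v 0^2*v 2*w 0*w 2 + 2*v 0^2*v 1*w 0*w 1 + v 0^3) * h2 + (w 0 + w 0*w 2^2 + w 0*w 1^2 - v 2^2*w 0 - 2*v 2^2*w 0*w 2^2 - v 2^2*w 0*w 1^2 - 2*v 1*v 2*w 0*w 1*w 2 - v 1^2*w 0 - v 1^2*w 0*w 2^2 - 2*v 1^2*w 0*w 1^2 + v 0*v 2*w 2 - 2*v 0*v 2*w 0^2*w 2 + v 0*v 1*w 1 - 2*v 0*v 1*w 0^2*w 1 - v 0^2*w 0) * h3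
    · simp only [fin3_mk0, fin3_mk1, fin3_mk2, fin4_mk0, fin4_mk1, fin4_mk2, fin4_mk3, Matrix.mul_apply, Fin.sum_univ_four, Matrix.zero_apply, Fin.isValue, Matrix.cons_val', Matrix.cons_val_zero, Matrix.cons_val_one, Matrix.head_cons, Matrix.empty_val', Matrix.cons_val_fin_one, Matrix.head_fin_const, Fin.mk_zero, Fin.mk_one, Matrix.cons_val_two, Matrix.cons_val_three, Matrix.tail_cons, Matrix.of_apply]
      linear_combination (0:ℝ) * h1
    · simp only [fin3_mk0, fin3_mk1, fin3_mk2, fin4_mk0, fin4_mk1, fin4_mk2, fin4_mk3, Matrix.mul_apply, Fin.sum_univ_four, Matrix.zero_apply, Fin.isValue, Matrix.cons_val', Matrix.cons_val_zero, Matrix.cons_val_one, Matrix.head_cons, Matrix.empty_val', Matrix.cons_val_fin_one, Matrix.head_fin_const, Fin.mk_zero, Fin.mk_one, Matrix.cons_val_two, Matrix.cons_val_three, Matrix.tail_cons, Matrix.of_apply]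
      linear_combination (-w 2 + w 2^3 - w 2^5 + w 1^2*w 2 - 2*w 1^2*w 2^3 - w 1^4*w 2 - w 0^2*w 2^3 - w 0^2*w 1^2*w 2) * h1 + (w 2 - w 2^3 - w 1^2*w 2 - v 2^2*w 2 + v 2^2*w 2^3 - v 2^2*w 0^2*w 2 + 2*v 1*v 2*w 1*w 2^2 - v 1^2*w 2 + v 1^2*w 1^2*w 2 - v 1^2*w 0^2*w 2 + 2*v 0*v 2*w 0*w 2^2 + 2*v 0*v 1*w 0*w 1*w 2 - v 0^2*w 2) * h2 + (v 2*w 2^2 + v 1*w 1*w 2 + v 0*w 0*w 2) * h3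
    · simp only [fin3_mk0, fin3_mk1, fin3_mk2, fin4_mk0, fin4_mk1, fin4_mk2, fin4_mk3, Matrix.mul_apply, Fin.sum_univ_four, Matrix.zero_apply, Fin.isValue, Matrix.cons_val', Matrix.cons_val_zero, Matrix.cons_val_one, Matrix.head_cons, Matrix.empty_val', Matrix.cons_val_fin_one, Matrix.head_fin_const, Fin.mk_zero, Fin.mk_one, Matrix.cons_val_two, Matrix.cons_val_three, Matrix.tail_cons, Matrix.of_apply]
      linear_combination (-w 0 + w 0*w 2^2 - w 0*w 2^4 + w 0*w 1^2 - 2*w 0*w 1^2*w 2^2 - w 0*w 1^4 - w 0^3*w 2^2 - w 0^3*w 1^2) * h1 + (w 0 - w 0*w 2^2 - w 0*w 1^2 - v 2^2*w 0 + v 2^2*w 0*w 2^2 - v 2^2*w 0^3 + 2*v 1*v 2*w 0*w 1*w 2 - v 1^2*w 0 + v 1^2*w 0*w 1^2 - v 1^2*w 0^3 + 2*v 0*v 2*w 0^2*w 2 + 2*v 0*v 1*w 0^2*w 1 - v 0^2*w 0) * h2 + (v 2*w 0*w 2 + v 1*w 0*w 1 + v 0*w 0^2) * h3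
    · simp only [fin3_mk0, fin3_mk1, fin3_mk2, fin4_mk0, fin4_mk1, fin4_mk2, fin4_mk3, Matrix.mul_apply, Fin.sum_univ_four, Matrix.zero_apply, Fin.isValue, Matrix.cons_val', Matrix.cons_val_zero, Matrix.cons_val_one, Matrix.head_cons, Matrix.empty_val', Matrix.cons_val_fin_one, Matrix.head_fin_const, Fin.mk_zero, Fin.mk_one, Matrix.cons_val_two, Matrix.cons_val_three, Matrix.tail_cons, Matrix.of_apply]
      linear_combination (-w 1 + w 1*w 2^2 - w 1*w 2^4 + w 1^3 - 2*w 1^3*w 2^2 - w 1^5 - w 0^2*w 1*w 2^2 - w 0^2*w 1^3) * h1 + (w 1 - w 1*w 2^2 - w 1^3 - v 2^2*w 1 + v 2^2*w 1*w 2^2 - v 2^2*w 0^2*w 1 + 2*v 1*v 2*w 1^2*w 2 - v 1^2*w 1 + v 1^2*w 1^3 - v 1^2*w 0^2*w 1 + 2*v 0*v 2*w 0*w 1*w 2 + 2*v 0*v 1*w 0*w 1^2 - v 0^2*w 1) * h2 + (v 2*w 1*w 2 + v 1*w 1^2 + v 0*w 0*w 1) * h3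
    · simp only [fin3_mk0, fin3_mk1, fin3_mk2, fin4_mk0, fin4_mk1, fin4_mk2, fin4_mk3, Matrix.mul_apply, Fin.sum_univ_four, Matrix.zero_apply, Fin.isValue, Matrix.cons_val', Matrix.cons_val_zero, Matrix.cons_val_one, Matrix.head_cons, Matrix.empty_val', Matrix.cons_val_fin_one, Matrix.head_fin_const, Fin.mk_zero, Fin.mk_one, Matrix.cons_val_two, Matrix.cons_val_three, Matrix.tail_cons, Matrix.of_apply]
      linear_combination (-w 2 + w 2^3 - w 2^5 + w 1^2*w 2 - 2*w 1^2*w 2^3 - w 1^4*w 2 - w 0^2*w 2^3 - w 0^2*w 1^2*w 2) * h1 + (w 2 - w 2^3 - w 1^2*w 2 - v 2^2*w 2 + v 2^2*w 2^3 - v 2^2*w 0^2*w 2 + 2*v 1*v 2*w 1*w 2^2 - v 1^2*w 2 + v 1^2*w 1^2*w 2 - v 1^2*w 0^2*w 2 + 2*v 0*v 2*w 0*w 2^2 + 2*v 0*v 1*w 0*w 1*w 2 - v 0^2*w 2) * h2 + (v 2*w 2^2 + v 1*w 1*w 2 + v 0*w 0*w 2) * h3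
    · simp only [fin3_mk0, fin3_mk1, fin3_mk2, fin4_mk0, fin4_mk1, fin4_mk2, fin4_mk3, Matrix.mul_apply, Fin.sum_univ_four, Matrix.zero_apply, Fin.isValue, Matrix.cons_val', Matrix.cons_val_zero, Matrix.cons_val_one, Matrix.head_cons, Matrix.empty_val', Matrix.cons_val_fin_one, Matrix.head_fin_const, Fin.mk_zero, Fin.mk_one, Matrix.cons_val_two, Matrix.cons_val_three, Matrix.tail_cons, Matrix.of_apply]
      linear_combination (0:ℝ) * h1
end
end

section
/- Let v, w ∈ ℝ³ satisfy ‖v‖ = ‖w‖ = 1 and ⟨v,w⟩ = 0, let B be a skew-symmetric real 3×3 matrix with B·v = 0, and let A = [[B, w],[wᵀ, 0]] be the associated real 4×4 block matrix. Let v̄ = (v₁, v₂, v₃, 0) ∈ ℝ⁴ and e₄ = (0,0,0,1). Define f : ℝ² → ℝ⁴ by f(t,s) = exp(tA) · (sinh(s)·v̄ + cosh(s)·e₄). Then for all (t,s) ∈ ℝ², ⟨f(t,s), f(t,s)⟩_L = −1 and the fourth coordinate of f(t,s) is positive; that is, f takes values in the hyperboloid model ℍ³ = { x ∈ ℝ⁴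 : ⟨x,x⟩_L = −1, x₄ > 0 } of hyperbolic 3-space. -/
open Matrix RealInnerProductSpace

noncomputable section

/-!
The block matrix `A = [[B, w], [wᵀ, 0]]` is skew-adjoint for the Lorentz form, `J A J = -Aᵀ` with
`J = diag(1, 1, 1, -1)`, so every `exp(tA)` is a Lorentz isometry; as `σ(s)` lies on the
hyperboloid `⟨x, x⟩_L = -1`, so does `f(t, s)`. That hyperboloid has the two sheets `x₄ ≥ 1` and
`x₄ ≤ -1`, and the continuous map `f` on the connected plane takes the value `e₄` at `(0, 0)`, so it
stays on the upper sheet.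
-/

namespace Matrix

variable {m : Type*} [Fintype m] [DecidableEq m]

theorem continuous_exp : Continuous (NormedSpace.exp : Matrix m m ℝ → Matrix m m ℝ) := by
  let : NormedRing (Matrix m m ℝ) := Matrix.linftyOpNormedRing
  let : NormedAlgebra ℝ (Matrix m m ℝ) := Matrix.linftyOpNormedAlgebra
  let : NormedAlgebra ℚ (Matrix m m ℝ) := NormedAlgebra.restrictScalars ℚ ℝ _
  exact NormedSpace.exp_continuous

theorem transpose_exp_mul_mul_exp {𝔸 : Type*} [NormedCommRing 𝔸] [NormedAlgebra ℚ 𝔸]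
    [CompleteSpace 𝔸] {J A : Matrix m m 𝔸} (hJ : J * J = 1) (hA : J * A * J = -Aᵀ) :
    (NormedSpace.exp A)ᵀ * J * NormedSpace.exp A = J := by
  have hexp_transpose : (NormedSpace.exp A)ᵀ = J * NormedSpace.exp (-A) * J := by
    have hconj := exp_conj J (-A) (IsUnit.of_mul_eq_one J hJ)
    rwa [inv_eq_right_inv hJ, mul_neg, neg_mul, hA, neg_neg, exp_transpose] at hconj
  calc (NormedSpace.exp A)ᵀ * J * NormedSpace.exp A
      = J * (NormedSpace.exp (-A) * NormedSpace.exp A) := by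
        rw [hexp_transpose]
        simp only [mul_assoc]
        rw [← mul_assoc J J, hJ, one_mul]
    _ = J := by
        rw [exp_neg, nonsing_inv_mul _ ((isUnit_iff_isUnit_det _).mp (isUnit_exp A)), mul_one]

end Matrix

theorem lorentz_eq_dotProduct_mulVec (x y : Fin 4 → ℝ) : lorentz x y = x ⬝ᵥ lorentzJ *ᵥ y := by
  simp [lorentz, lorentzJ, dotProduct, mulVec_diagonal, Fin.sum_univ_four, sub_eq_add_neg]

theorem lorentzJ_mul_self : lorentzJ * lorentzJ = 1 := by
  rw [lorentzJ, diagonal_mul_diagonal, ← diagonal_one]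
  congr 1
  ext i
  fin_cases i <;> norm_num

theorem lorentz_mulVec_mulVec {M : Matrix (Fin 4) (Fin 4) ℝ} (hM : Mᵀ * lorentzJ * M = lorentzJ)
    (x y : Fin 4 → ℝ) : lorentz (M *ᵥ x) (M *ᵥ y) = lorentz x y := by
  rw [lorentz_eq_dotProduct_mulVec, lorentz_eq_dotProduct_mulVec, mulVec_mulVec,
    ← vecMul_transpose, dotProduct_mulVec, vecMul_vecMul, ← dotProduct_mulVec, ← Matrix.mul_assoc,
    hM]

theorem lorentzJ_mul_blockA_mul_lorentzJ {B : Matrix (Fin 3) (Fin 3) ℝ} (hB : Bᵀ = -B)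
    (w : Fin 3 → ℝ) : lorentzJ * blockA B w * lorentzJ = -(blockA B w)ᵀ := by
  have hB_apply (i j : Fin 3) : B j i = -B i j := congrFun (congrFun hB i) j
  ext i j
  fin_cases i <;> fin_cases j <;>
    simp [lorentzJ, blockA, mul_apply, Fin.sum_univ_four, diagonal] <;> exact hB_apply _ _

theorem lorentz_smul_extend3_add_smul_e4 (v : EuclideanSpace ℝ (Fin 3)) (a b : ℝ) :
    lorentz (a • extend3 v + b • e4) (a • extend3 v + b • e4) = a ^ 2 * ‖v‖ ^ 2 - b ^ 2 := by
  simp [lorentz, extend3, e4, EuclideanSpace.real_norm_sq_eq, Fin.sum_univ_three]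
  ring

theorem apply_three_ne_zero_of_lorentz_self_eq_neg_one {x : Fin 4 → ℝ}
    (hx : lorentz x x = -1) : x 3 ≠ 0 := by
  intro h3
  simp only [lorentz, h3, mul_zero, sub_zero] at hx
  nlinarith [mul_self_nonneg (x 0), mul_self_nonneg (x 1), mul_self_nonneg (x 2)]

theorem pos_of_continuous_of_ne_zero {X : Type*} [TopologicalSpace X] [PreconnectedSpace X]
    {g : X → ℝ} (hg : Continuous g) (hne : ∀ x, g x ≠ 0) {a : X} (ha : 0 < g a) (x : X) :
    0 < g x := by
  by_contra! hx
  obtain ⟨y, hy⟩ := intermediate_value_univ x a hg ⟨hx, ha.le⟩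
  exact hne y hy

theorem f_mem_hyperboloid_general
    (v w : EuclideanSpace ℝ (Fin 3)) (hv : ‖v‖ = 1)
    (B : Matrix (Fin 3) (Fin 3) ℝ) (hB : Bᵀ = -B)
    (f : ℝ × ℝ → (Fin 4 → ℝ))
    (hf : ∀ p : ℝ × ℝ, f p = (NormedSpace.exp (p.1 • blockA B w)).mulVec
      (Real.sinh p.2 • extend3 v + Real.cosh p.2 • e4)) :
    ∀ p : ℝ × ℝ, lorentz (f p) (f p) = -1 ∧ 0 < f p 3 := by
  have hlorentz (p : ℝ × ℝ) : lorentz (f p) (f p) = -1 := by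
    have hskew : lorentzJ * (p.1 • blockA B w) * lorentzJ = -(p.1 • blockA B w)ᵀ := by
      rw [mul_smul_comm, smul_mul_assoc, lorentzJ_mul_blockA_mul_lorentzJ hB, transpose_smul,
        smul_neg]
    rw [hf, lorentz_mulVec_mulVec (transpose_exp_mul_mul_exp lorentzJ_mul_self hskew),
      lorentz_smul_extend3_add_smul_e4, hv, one_pow, mul_one, Real.sinh_sq]
    ring
  have hcont : Continuous fun p : ℝ × ℝ => f p 3 := by
    simp_rw [hf]
    refine (continuous_apply 3).comp (Continuous.matrix_mulVec ?_ (by fun_prop))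
    exact Matrix.continuous_exp.comp (continuous_fst.smul continuous_const)
  have hbase : f (0, 0) 3 = 1 := by
    simp [hf, e4]
  exact fun p => ⟨hlorentz p, pos_of_continuous_of_ne_zero hcont
    (fun q => apply_three_ne_zero_of_lorentz_self_eq_neg_one (hlorentz q)) (hbase ▸ one_pos) p⟩

/-- The map `f(t,s) = exp(tA) · (sinh(s)·v̄ + cosh(s)·e₄)` built from orthonormal
`v, w ∈ ℝ³` and a skew-symmetric `B` with `B·v = 0` takes values in the hyperboloid
model `ℍ³ = { x ∈ ℝ⁴ : ⟨x,x⟩_L = −1, x₄ > 0 }`. -/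
theorem f_mem_hyperboloid
    (v w : EuclideanSpace ℝ (Fin 3)) (hv : ‖v‖ = 1) (hw : ‖w‖ = 1) (hvw : ⟪v, w⟫ = 0)
    (B : Matrix (Fin 3) (Fin 3) ℝ) (hB : Bᵀ = -B) (hBv : B.mulVec v = 0)
    (f : ℝ × ℝ → (Fin 4 → ℝ))
    (hf : ∀ p : ℝ × ℝ, f p = (NormedSpace.exp (p.1 • blockA B w)).mulVec
      (Real.sinh p.2 • extend3 v + Real.cosh p.2 • e4)) :
    ∀ p : ℝ × ℝ, lorentz (f p) (f p) = -1 ∧ 0 < f p 3 :=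
  f_mem_hyperboloid_general v w hv B hB f hf
end
end

section
/- Let v, w ∈ ℝ³ satisfy ‖v‖ = ‖w‖ = 1 and ⟨v,w⟩ = 0, let B be a skew-symmetric real 3×3 matrix with B·v = 0 and B·w ≠ 0, and let A = [[B, w],[wᵀ, 0]] be the associated real 4×4 block matrix, assumed to satisfy A³ = 0. Let v̄ = (v₁, v₂, v₃, 0) and e₄ = (0,0,0,1). Then the map f : ℝ² → ℝ⁴ given by f(t,s) = exp(tA) · (sinh(s)·v̄ + cosh(s)·e₄) is injective. -/
/-!
Since `A³ = 0`, `exp (tA) = 1 + tA + (t²/2)A²`. As `A v̄ = 0` and `A e₄ = w̄`, this gives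
`f(t,s) = sinh s • v̄ + cosh s • (e₄ + t • w̄ + (t²/2) • (B w + e₄))`. Skew-symmetry of `B` and
`B v = 0` make `B w` orthogonal to both `v` and `w`, so the Euclidean pairings of `f(t,s)` with
`v̄` and `w̄` are `sinh s` and `t cosh s`; these determine `s` and then `t`.
-/

open Matrix RealInnerProductSpace

noncomputable section

open Finset NormedSpace

open scoped Nat in
theorem NormedSpace.exp_eq_sum_of_pow_eq_zero (𝕂 : Type*) {𝔸 : Type*} [Field 𝕂] [CharZero 𝕂]
    [Ring 𝔸] [Algebra 𝕂 𝔸] [TopologicalSpace 𝔸] [IsTopologicalRing 𝔸] {x : 𝔸} {n : ℕ}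
    (hx : x ^ n = 0) : exp x = ∑ i ∈ range n, (i !⁻¹ : 𝕂) • x ^ i := by
  rw [exp_eq_tsum 𝕂]
  refine tsum_eq_sum fun i hi => ?_
  rw [pow_eq_zero_of_le (not_lt.mp (mem_range.not.mp hi)) hx, smul_zero]

theorem Matrix.exp_smul_mulVec_of_pow_three_eq_zero {𝕂 n : Type*} [Field 𝕂] [CharZero 𝕂]
    [TopologicalSpace 𝕂] [IsTopologicalRing 𝕂] [Fintype n] [DecidableEq n]
    {A : Matrix n n 𝕂} (hA : A ^ 3 = 0) (t : 𝕂) (x : n → 𝕂) :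
    exp (t • A) *ᵥ x = x + t • A *ᵥ x + (t ^ 2 / 2) • A *ᵥ A *ᵥ x := by
  rw [exp_eq_sum_of_pow_eq_zero 𝕂 (by rw [smul_pow, hA, smul_zero] : (t • A) ^ 3 = 0)]
  simp only [sum_range_succ, range_zero, sum_empty, zero_add, smul_pow, add_mulVec,
    smul_mulVec, mulVec_mulVec, pow_two, pow_one, pow_zero, one_mulVec]
  norm_num [Nat.factorial]
  module

theorem Matrix.dotProduct_mulVec_of_transpose_eq_neg {R n : Type*} [CommRing R] [Fintype n]
    {B : Matrix n n R} (hB : Bᵀ = -B) (u u' : n → R) : u ⬝ᵥ B *ᵥ u' = -(B *ᵥ u ⬝ᵥ u') := by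
  rw [dotProduct_mulVec, ← mulVec_transpose, hB, neg_mulVec, neg_dotProduct]

theorem Matrix.dotProduct_mulVec_self_of_transpose_eq_neg {R n : Type*} [CommRing R]
    [IsAddTorsionFree R] [Fintype n] {B : Matrix n n R} (hB : Bᵀ = -B) (u : n → R) :
    u ⬝ᵥ B *ᵥ u = 0 := by
  have h := dotProduct_mulVec_of_transpose_eq_neg hB u u
  rw [dotProduct_comm (B *ᵥ u)] at h
  exact self_eq_neg.mp h

theorem EuclideanSpace.dotProduct_self_eq_norm_sq {ι : Type*} [Fintype ι]
    (x : EuclideanSpace ℝ ι) : x.ofLp ⬝ᵥ x.ofLp = ‖x‖ ^ 2 := by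
  rw [← real_inner_self_eq_norm_sq, EuclideanSpace.inner_eq_star_dotProduct, star_trivial]

theorem extend3_dotProduct_extend3 (u u' : Fin 3 → ℝ) : extend3 u ⬝ᵥ extend3 u' = u ⬝ᵥ u' := by
  simp [dotProduct, extend3, Fin.sum_univ_four, Fin.sum_univ_three]

theorem extend3_dotProduct_e4 (u : Fin 3 → ℝ) : extend3 u ⬝ᵥ e4 = 0 := by
  simp [dotProduct, extend3, e4]

theorem blockA_mulVec_extend3 (B : Matrix (Fin 3) (Fin 3) ℝ) (w u : Fin 3 → ℝ) :
    blockA B w *ᵥ extend3 u = extend3 (B *ᵥ u) + (w ⬝ᵥ u) • e4 := by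
  ext i
  fin_cases i <;> simp [blockA, extend3, e4, mulVec, dotProduct, Fin.sum_univ_four,
    Fin.sum_univ_three]

theorem blockA_mulVec_e4 (B : Matrix (Fin 3) (Fin 3) ℝ) (w : Fin 3 → ℝ) :
    blockA B w *ᵥ e4 = extend3 w := by
  ext i
  fin_cases i <;> simp [blockA, extend3, e4, mulVec, dotProduct]

section Orbit

variable {B : Matrix (Fin 3) (Fin 3) ℝ} {v w : Fin 3 → ℝ}

theorem exp_smul_blockA_mulVec (hA : blockA B w ^ 3 = 0) (hBv : B *ᵥ v = 0) (hwv : w ⬝ᵥ v = 0)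
    (t a c : ℝ) :
    exp (t • blockA B w) *ᵥ (a • extend3 v + c • e4) = a • extend3 v
      + c • (e4 + t • extend3 w + (t ^ 2 / 2) • (extend3 (B *ᵥ w) + (w ⬝ᵥ w) • e4)) := by
  have hAv : blockA B w *ᵥ extend3 v = 0 := by
    rw [blockA_mulVec_extend3, hBv, hwv, zero_smul, add_zero]
    ext i
    simp [extend3]
  rw [exp_smul_mulVec_of_pow_three_eq_zero hA]
  simp only [mulVec_add, mulVec_smul, hAv, smul_zero]
  simp only [blockA_mulVec_e4, blockA_mulVec_extend3, mulVec_zero]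
  module

theorem dotProduct_exp_smul_blockA_mulVec (hB : Bᵀ = -B) (hBv : B *ᵥ v = 0)
    (hA : blockA B w ^ 3 = 0) (hvv : v ⬝ᵥ v = 1) (hww : w ⬝ᵥ w = 1) (hwv : w ⬝ᵥ v = 0)
    (t a c : ℝ) :
    extend3 v ⬝ᵥ exp (t • blockA B w) *ᵥ (a • extend3 v + c • e4) = a ∧
      extend3 w ⬝ᵥ exp (t • blockA B w) *ᵥ (a • extend3 v + c • e4) = t * c := by
  have hvw : v ⬝ᵥ w = 0 := by rw [dotProduct_comm, hwv]
  have hvBw : v ⬝ᵥ B *ᵥ w = 0 := by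
    rw [dotProduct_mulVec_of_transpose_eq_neg hB, hBv, zero_dotProduct, neg_zero]
  have hwBw : w ⬝ᵥ B *ᵥ w = 0 := dotProduct_mulVec_self_of_transpose_eq_neg hB w
  rw [exp_smul_blockA_mulVec hA hBv hwv]
  simp only [dotProduct_add, dotProduct_smul, extend3_dotProduct_extend3, extend3_dotProduct_e4,
    hvv, hww, hvw, hwv, hvBw, hwBw, smul_eq_mul]
  constructor <;> ring

end Orbit

theorem f_injective_general
    (v w : EuclideanSpace ℝ (Fin 3)) (hv : ‖v‖ = 1) (hw : ‖w‖ = 1) (hvw : ⟪v, w⟫ = 0)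
    (B : Matrix (Fin 3) (Fin 3) ℝ) (hB : Bᵀ = -B) (hBv : B.mulVec v = 0)
    (hA : blockA B w ^ 3 = 0)
    (f : ℝ × ℝ → (Fin 4 → ℝ))
    (hf : ∀ p : ℝ × ℝ, f p = (NormedSpace.exp (p.1 • blockA B w)).mulVec
      (Real.sinh p.2 • extend3 v + Real.cosh p.2 • e4)) :
    Function.Injective f := by
  have hvv := EuclideanSpace.dotProduct_self_eq_norm_sq v
  have hww := EuclideanSpace.dotProduct_self_eq_norm_sq w
  rw [hv, one_pow] at hvv
  rw [hw, one_pow] at hww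
  rw [EuclideanSpace.inner_eq_star_dotProduct, star_trivial] at hvw
  have hf_dot (p : ℝ × ℝ) : extend3 v ⬝ᵥ f p = Real.sinh p.2 ∧
      extend3 w ⬝ᵥ f p = p.1 * Real.cosh p.2 :=
    hf p ▸ dotProduct_exp_smul_blockA_mulVec hB hBv hA hvv hww hvw p.1 _ _
  intro p q hpq
  obtain ⟨hp_v, hp_w⟩ := hf_dot p
  obtain ⟨hq_v, hq_w⟩ := hf_dot q
  rw [hpq] at hp_v hp_w
  have hs : p.2 = q.2 := Real.sinh_injective (hp_v.symm.trans hq_v)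
  rw [hs] at hp_w
  exact Prod.ext (mul_right_cancel₀ (Real.cosh_pos _).ne' (hp_w.symm.trans hq_w)) hs

/-- Injectivity of `f(t,s) = exp(tA)·(sinh(s)·v̄ + cosh(s)·e₄)` for `A = [[B, w],[wᵀ, 0]]`
with `B` skew-symmetric, `B·v = 0`, `B·w ≠ 0` and `A³ = 0` (`v, w` orthonormal in `ℝ³`). -/
theorem f_injective
    (v w : EuclideanSpace ℝ (Fin 3)) (hv : ‖v‖ = 1) (hw : ‖w‖ = 1) (hvw : ⟪v, w⟫ = 0)
    (B : Matrix (Fin 3) (Fin 3) ℝ) (hB : Bᵀ = -B) (hBv : B.mulVec v = 0)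
    (hBw : B.mulVec w ≠ 0) (hA : blockA B w ^ 3 = 0)
    (f : ℝ × ℝ → (Fin 4 → ℝ))
    (hf : ∀ p : ℝ × ℝ, f p = (NormedSpace.exp (p.1 • blockA B w)).mulVec
      (Real.sinh p.2 • extend3 v + Real.cosh p.2 • e4)) :
    Function.Injective f :=
  f_injective_general v w hv hw hvw B hB hBv hA f hf
end
end

section
/- Let v, w ∈ ℝ³ satisfy ‖v‖ = ‖w‖ = 1 and ⟨v,w⟩ = 0, let B be a skew-symmetric real 3×3 matrix with B·v = 0 and B·w ≠ 0, and let A = [[B, w],[wᵀ, 0]] be the associated real 4×4 block matrix, assumed to satisfy A³ = 0. Let v̄ = (v₁, v₂, v₃, 0) and e₄ = (0,0,0,1), and define f : ℝ² → ℝ⁴ by f(t,s) = exp(tA) · (sinh(s)·v̄ + cosh(s)·e₄). Then f is smooth and for every point (t,s) ∈ ℝ² the total derivative of f at (t,s) is an injective linear map from ℝ² to ℝ⁴; that is, f is an immersion. -/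
open Matrix RealInnerProductSpace

noncomputable section

/-! ### Auxiliary lemmas -/

lemma exp_of_cube_eq_zero (M : Matrix (Fin 4) (Fin 4) ℝ) (h : M ^ 3 = 0) :
    NormedSpace.exp M = 1 + M + (2⁻¹ : ℝ) • (M ^ 2) := by
  rw [NormedSpace.exp_eq_tsum ℝ]; beta_reduce
  rw [tsum_eq_sum (s := Finset.range 3) (fun n hn => by
    obtain ⟨k, rfl⟩ : ∃ k, n = 3 + k := ⟨n - 3, by simp at hn; omega⟩
    rw [pow_add, h, zero_mul, smul_zero])]
  simp [Finset.sum_range_succ, Nat.factorial]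

lemma exp_smul_of_cube_eq_zero (M : Matrix (Fin 4) (Fin 4) ℝ) (h : M ^ 3 = 0) (t : ℝ) :
    NormedSpace.exp (t • M) = 1 + t • M + (2⁻¹ * (t * t)) • (M ^ 2) := by
  rw [exp_of_cube_eq_zero _ (by rw [smul_pow, h, smul_zero]), smul_pow]
  module

lemma blockA_mulVec (B : Matrix (Fin 3) (Fin 3) ℝ) (w x : Fin 3 → ℝ) (a : ℝ) :
    (blockA B w).mulVec (extend3 x + a • e4)
      = extend3 (B.mulVec x + a • w) + (∑ j, w j * x j) • e4 := by
  funext i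
  fin_cases i <;>
    simp (config := { decide := true }) [blockA, extend3, e4, Matrix.mulVec, dotProduct,
      Fin.sum_univ_four, Fin.sum_univ_three, Fin.isValue, show ((3:Fin 4):ℕ) = 3 from rfl] <;> ring

@[simp] lemma extend3_zero : extend3 0 = 0 := by
  funext i; simp [extend3]

lemma extend3_lt (x : Fin 3 → ℝ) (i : Fin 3) (h : (i : ℕ) < 4) : extend3 x ⟨i, h⟩ = x i := by
  simp [extend3, i.isLt]

lemma e4_lt (i : Fin 3) (h : (i : ℕ) < 4) : e4 ⟨i, h⟩ = 0 := by
  have h3 : (i : ℕ) ≠ 3 := by omega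
  simp [e4, Fin.ext_iff, show ((3:Fin 4):ℕ) = 3 from rfl, h3]

lemma dot_comb (w v bw : Fin 3 → ℝ) (α β γ : ℝ)
    (h : ∀ i, α * w i + β * v i + γ * bw i = 0) (x : Fin 3 → ℝ) :
    α * (∑ i, x i * w i) + β * (∑ i, x i * v i) + γ * (∑ i, x i * bw i) = 0 := by
  calc α * (∑ i, x i * w i) + β * (∑ i, x i * v i) + γ * (∑ i, x i * bw i)
      = ∑ i, x i * (α * w i + β * v i + γ * bw i) := by
        rw [Finset.mul_sum, Finset.mul_sum, Finset.mul_sum, ← Finset.sum_add_distrib,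
          ← Finset.sum_add_distrib]
        exact Finset.sum_congr rfl fun i _ => by ring
    _ = 0 := by simp [h]

/-- The map `f(t,s) = exp(tA)·(sinh(s)·v̄ + cosh(s)·e₄)` of the hyperbolic counterexample
is smooth and its total derivative at every point is an injective linear map `ℝ² → ℝ⁴`;
that is, `f` is an immersion. -/
theorem f_immersion
    (v w : EuclideanSpace ℝ (Fin 3)) (hv : ‖v‖ = 1) (hw : ‖w‖ = 1) (hvw : ⟪v, w⟫ = 0)
    (B : Matrix (Fin 3) (Fin 3) ℝ) (hB : Bᵀ = -B) (hBv : B.mulVec v = 0)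
    (hBw : B.mulVec w ≠ 0) (hA : blockA B w ^ 3 = 0)
    (f : ℝ × ℝ → (Fin 4 → ℝ))
    (hf : ∀ p : ℝ × ℝ, f p = (NormedSpace.exp (p.1 • blockA B w)).mulVec
      (Real.sinh p.2 • extend3 v + Real.cosh p.2 • e4)) :
    ContDiff ℝ (⊤ : ℕ∞) f ∧ ∀ p : ℝ × ℝ, Function.Injective (fderiv ℝ f p) := by
  -- dot product facts
  have hSvw : ∑ i, (v : Fin 3 → ℝ) i * w i = 0 := by
    have h := hvw
    simp [PiLp.inner_apply, RCLike.inner_apply, conj_trivial] at h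
    rw [← h]; exact Finset.sum_congr rfl fun i _ => mul_comm _ _
  have hSvv : ∑ i, (v : Fin 3 → ℝ) i * v i = 1 := by
    have h := real_inner_self_eq_norm_sq v
    rw [hv] at h
    simp only [PiLp.inner_apply, RCLike.inner_apply, conj_trivial, one_pow] at h
    rw [← h]
  have hSww : ∑ i, (w : Fin 3 → ℝ) i * w i = 1 := by
    have h := real_inner_self_eq_norm_sq w
    rw [hw] at h
    simp only [PiLp.inner_apply, RCLike.inner_apply, conj_trivial, one_pow] at h
    rw [← h]
  have hSwv : ∑ i, (w : Fin 3 → ℝ) i * v i = 0 := by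
    rw [← hSvw]; exact Finset.sum_congr rfl fun i _ => mul_comm _ _
  have hSvBw : ∑ i, (v : Fin 3 → ℝ) i * (B.mulVec w) i = 0 := by
    have h : (v : Fin 3 → ℝ) ⬝ᵥ B.mulVec w = 0 := by
      rw [Matrix.dotProduct_mulVec, ← Matrix.mulVec_transpose, hB, Matrix.neg_mulVec, hBv]
      simp
    simpa [dotProduct] using h
  have hSwBw : ∑ i, (w : Fin 3 → ℝ) i * (B.mulVec w) i = 0 := by
    have h2 : (w : Fin 3 → ℝ) ⬝ᵥ B.mulVec w = -((w : Fin 3 → ℝ) ⬝ᵥ B.mulVec w) := by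
      conv_lhs => rw [Matrix.dotProduct_mulVec, ← Matrix.mulVec_transpose, hB,
        Matrix.neg_mulVec, neg_dotProduct, dotProduct_comm]
    have h3 : (w : Fin 3 → ℝ) ⬝ᵥ B.mulVec w = 0 := by linarith
    simpa [dotProduct] using h3
  -- action of A on the basic vectors
  set u : Fin 4 → ℝ := extend3 (B.mulVec w) + e4 with hu
  have hAv : (blockA B w).mulVec (extend3 v) = 0 := by
    have h := blockA_mulVec B w v 0
    simpa [hBv, hSwv] using h
  have hAe4 : (blockA B w).mulVec e4 = extend3 w := by
    have h := blockA_mulVec B w 0 1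
    simpa using h
  have hAw : (blockA B w).mulVec (extend3 w) = u := by
    have h := blockA_mulVec B w w 0
    simpa [hSww] using h
  -- the explicit polynomial form of f
  have hfF : f = fun p : ℝ × ℝ =>
      Real.sinh p.2 • extend3 v + Real.cosh p.2 • e4 + (p.1 * Real.cosh p.2) • extend3 w
        + (2⁻¹ * (p.1 * p.1) * Real.cosh p.2) • u := by
    funext p
    rw [hf p, exp_smul_of_cube_eq_zero _ hA p.1]
    have hc : (blockA B w).mulVec (Real.sinh p.2 • extend3 v + Real.cosh p.2 • e4)
        = Real.cosh p.2 • extend3 w := by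
      rw [Matrix.mulVec_add, Matrix.mulVec_smul, Matrix.mulVec_smul, hAv, hAe4]
      simp
    have hc2 : (blockA B w ^ 2).mulVec (Real.sinh p.2 • extend3 v + Real.cosh p.2 • e4)
        = Real.cosh p.2 • u := by
      rw [pow_two, ← Matrix.mulVec_mulVec, hc, Matrix.mulVec_smul, hAw]
    rw [Matrix.add_mulVec, Matrix.add_mulVec, Matrix.one_mulVec, Matrix.smul_mulVec,
      Matrix.smul_mulVec, hc, hc2]
    module
  rw [hfF]
  constructor
  · refine ContDiff.add (ContDiff.add (ContDiff.add ?_ ?_) ?_) ?_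
    · exact (Real.contDiff_sinh.comp contDiff_snd).smul contDiff_const
    · exact (Real.contDiff_cosh.comp contDiff_snd).smul contDiff_const
    · exact (contDiff_fst.mul (Real.contDiff_cosh.comp contDiff_snd)).smul contDiff_const
    · exact ((contDiff_const.mul (contDiff_fst.mul contDiff_fst)).mul
        (Real.contDiff_cosh.comp contDiff_snd)).smul contDiff_const
  · rintro ⟨t, s⟩
    have h2c : HasFDerivAt (fun p : ℝ × ℝ => Real.cosh p.2)
        (Real.sinh s • ContinuousLinearMap.snd ℝ ℝ ℝ) (t, s) := (Real.hasDerivAt_cosh s).comp_hasFDerivAt (f := Prod.snd) (t, s) hasFDerivAt_snd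
    have h1 : HasFDerivAt (fun p : ℝ × ℝ => Real.sinh p.2)
        (Real.cosh s • ContinuousLinearMap.snd ℝ ℝ ℝ) (t, s) := (Real.hasDerivAt_sinh s).comp_hasFDerivAt (f := Prod.snd) (t, s) hasFDerivAt_snd
    have h3 := (hasFDerivAt_fst (𝕜 := ℝ) (E := ℝ) (F := ℝ) (p := (t, s))).mul h2c
    have h5 := ((hasFDerivAt_fst (𝕜 := ℝ) (E := ℝ) (F := ℝ) (p := (t, s))).mul
      (hasFDerivAt_fst (𝕜 := ℝ) (E := ℝ) (F := ℝ) (p := (t, s)))).const_mul (2⁻¹ : ℝ)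
    have h4 := h5.mul h2c
    have hFd : HasFDerivAt (fun p : ℝ × ℝ =>
        Real.sinh p.2 • extend3 v + Real.cosh p.2 • e4 + (p.1 * Real.cosh p.2) • extend3 w
          + (2⁻¹ * (p.1 * p.1) * Real.cosh p.2) • u)
        ((((Real.cosh s • ContinuousLinearMap.snd ℝ ℝ ℝ).smulRight (extend3 v)) +
          ((Real.sinh s • ContinuousLinearMap.snd ℝ ℝ ℝ).smulRight e4)) +
          ((t • (Real.sinh s • ContinuousLinearMap.snd ℝ ℝ ℝ)
            + Real.cosh s • ContinuousLinearMap.fst ℝ ℝ ℝ).smulRight (extend3 w)) +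
          (((2⁻¹ * (t * t)) • (Real.sinh s • ContinuousLinearMap.snd ℝ ℝ ℝ)
            + Real.cosh s • ((2⁻¹ : ℝ) • (t • ContinuousLinearMap.fst ℝ ℝ ℝ
              + t • ContinuousLinearMap.fst ℝ ℝ ℝ))).smulRight u)) (t, s) :=
      (((h1.smul_const (extend3 v)).add (h2c.smul_const e4)).add
        (h3.smul_const (extend3 w))).add (h4.smul_const u)
    rw [hFd.fderiv]
    intro z₁ z₂ hzz
    apply sub_eq_zero.mp
    have hz := sub_eq_zero.mpr hzz
    rw [← map_sub] at hz
    set z := z₁ - z₂ with hzdef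
    clear_value z
    clear hzdef hzz
    obtain ⟨zx, zy⟩ := z
    have hco : ∀ i : Fin 3, (zx * Real.cosh s + zy * (t * Real.sinh s)) * w i
        + (zy * Real.cosh s) * v i
        + (zx * (t * Real.cosh s) + zy * (2⁻¹ * (t * t) * Real.sinh s)) * (B.mulVec w) i = 0 := by
      intro i
      have h0 := congrFun hz (⟨(i : ℕ), by omega⟩ : Fin 4)
      simp only [ContinuousLinearMap.add_apply, ContinuousLinearMap.smulRight_apply,
        ContinuousLinearMap.smul_apply, ContinuousLinearMap.coe_fst', ContinuousLinearMap.coe_snd',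
        ContinuousLinearMap.coe_smul', Pi.smul_apply, Pi.add_apply, Pi.zero_apply, smul_eq_mul,
        hu, extend3_lt, e4_lt] at h0
      linear_combination h0
    have e1 := dot_comb _ _ _ _ _ _ hco v
    rw [hSvw, hSvv, hSvBw] at e1
    have hy : zy = 0 := by
      have h6 : zy * Real.cosh s = 0 := by linear_combination e1
      rcases mul_eq_zero.mp h6 with h | h
      · exact h
      · exact absurd h (Real.cosh_pos s).ne'
    have e2 := dot_comb _ _ _ _ _ _ hco w
    rw [hSww, hSwv, hSwBw] at e2
    have hx : zx = 0 := by
      have h7 : zx * Real.cosh s = 0 := by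
        linear_combination e2 - (t * Real.sinh s) * hy
      rcases mul_eq_zero.mp h7 with h | h
      · exact h
      · exact absurd h (Real.cosh_pos s).ne'
    simp [Prod.ext_iff, hx, hy]
end
end
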